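/- arXiv:1902.01280 — 6 statements merged into one kernel-verified Lean document; each statement's English description precedes it below -/
import Mathlib

section
/- Let s be a primitive string of length n over Σ and π a context adaptive ordering family. For every string x with |x| ≤ n, the set Rng(x) is a contiguous interval of {1,…,n}: if i, j ∈ Rng(x) and i ≤ k ≤ j, then k ∈ Rng(x). -/
/-- The cyclic rotation of `s` by `r`: `s[r+1..n] s[1..r]`. -/
def rot {α : Type*} (s : List α) (r : ℕ) : List α := s.drop r ++ s.take r

/-- A string is primitive if its cyclic rotations are pairwise distinct. -/
def IsPrimitive {α : Type*} (s : List α) : Prop :=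
  ∀ r₁ r₂ : ℕ, r₁ < s.length → r₂ < s.length → rot s r₁ = rot s r₂ → r₁ = r₂

/-- The context adaptive order induced by a family `π` of linear orders on the
alphabet, one for each string (context): `u ≺ v` iff, `x = u[1..k] = v[1..k]`
being the longest common prefix of `u` and `v`, the symbol `u[k+1]` is
`π x`-smaller than `v[k+1]`. -/
def caLt {α : Type*} (π : List α → LinearOrder α) (u v : List α) : Prop :=
  ∃ (k : ℕ) (hu : k < u.length) (hv : k < v.length),
    u.take k = v.take k ∧ (π (u.take k)).lt (u.get ⟨k, hu⟩) (v.get ⟨k, hv⟩)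

/-- The matrix `M*(s)`: an enumeration of the cyclic rotations of `s`
listed in `≺`-increasing order; the `i`-th row is `row i`. -/
structure SortedRotMatrix {α : Type*} (π : List α → LinearOrder α) (s : List α) where
  row : Fin s.length → List α
  row_is_rot : ∀ i, ∃ r : Fin s.length, row i = rot s (r : ℕ)
  rot_is_row : ∀ r : Fin s.length, ∃ i, row i = rot s (r : ℕ)
  sorted : ∀ i j : Fin s.length, i < j → caLt π (row i) (row j)

/-- `Rng M x`: the set of row indices of `M*(s)` whose row has `x` as a prefix. -/
def Rng {α : Type*} [DecidableEq α] {π : List α → LinearOrder α} {s : List α}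
    (M : SortedRotMatrix π s) (x : List α) : Finset (Fin s.length) :=
  Finset.univ.filter (fun i => x <+: M.row i)

/-- If `x` is a prefix of `u` and of `w`, and `u ≺ v ≺ w`, then `x` is a prefix of `v`. -/
lemma caLt_sandwich {α : Type*} (π : List α → LinearOrder α) {x u v w : List α}
    (hxu : x <+: u) (hxw : x <+: w) (huv : caLt π u v) (hvw : caLt π v w) : x <+: v := by
  obtain ⟨k₁, hk₁u, hk₁v, htake₁, hlt₁⟩ := huv
  obtain ⟨k₂, hk₂v, hk₂w, htake₂, hlt₂⟩ := hvw
  by_cases h₁ : x.length ≤ k₁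
  · -- x = u.take |x| = v.take |x|
    have : v.take x.length = x := by
      have : v.take x.length = u.take x.length := by
        have := congrArg (List.take x.length) htake₁
        simpa [List.take_take, Nat.min_eq_left h₁] using this.symm
      rw [this, ← List.prefix_iff_eq_take.mp hxu]
    exact this ▸ List.take_prefix _ _
  by_cases h₂ : x.length ≤ k₂
  · have : v.take x.length = x := by
      have : v.take x.length = w.take x.length := by
        have := congrArg (List.take x.length) htake₂
        simpa [List.take_take, Nat.min_eq_left h₂] using this
      rw [this, ← List.prefix_iff_eq_take.mp hxw]
    exact this ▸ List.take_prefix _ _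
  push_neg at h₁ h₂
  exfalso
  have hxlen : x.length ≤ u.length := hxu.length_le
  have hxlenw : x.length ≤ w.length := hxw.length_le
  have hux : u.get ⟨k₁, hk₁u⟩ = x.get ⟨k₁, h₁⟩ := by
    have := hxu.getElem h₁
    simpa [List.get_eq_getElem] using this.symm
  have hwx : w.get ⟨k₂, hk₂w⟩ = x.get ⟨k₂, h₂⟩ := by
    have := hxw.getElem h₂
    simpa [List.get_eq_getElem] using this.symm
  -- contexts: u.take k₁ = x.take k₁ and v.take k₂ = x.take k₂
  have hctx₁ : u.take k₁ = x.take k₁ := by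
    have := congrArg (List.take k₁) (List.prefix_iff_eq_take.mp hxu)
    simpa [List.take_take, Nat.min_eq_left h₁.le] using this.symm
  have hctx₂ : v.take k₂ = x.take k₂ := by
    have hwk : w.take k₂ = x.take k₂ := by
      have := congrArg (List.take k₂) (List.prefix_iff_eq_take.mp hxw)
      simpa [List.take_take, Nat.min_eq_left h₂.le] using this.symm
    rw [htake₂, hwk]
  rcases lt_trichotomy k₁ k₂ with hk | hk | hk
  · -- v[k₁] = x[k₁], but x[k₁] <π v[k₁]
    have hvk : v.get ⟨k₁, hk₁v⟩ = x.get ⟨k₁, h₁⟩ := by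
      have h' : k₁ < (v.take k₂).length := by
        simp [Nat.min_eq_left hk₂v.le]; omega
      have := List.getElem_of_eq hctx₂ h'
      simpa [List.getElem_take, List.get_eq_getElem] using this
    rw [hux, hvk] at hlt₁
    letI := π (u.take k₁)
    exact lt_irrefl _ hlt₁
  · subst hk
    rw [hux] at hlt₁; rw [hwx] at hlt₂
    rw [hctx₁] at hlt₁
    rw [hctx₂] at hlt₂
    letI := π (x.take k₁)
    exact lt_irrefl _ (lt_trans hlt₁ hlt₂)
  · -- k₂ < k₁ : v[k₂] = u[k₂] = x[k₂], but v[k₂] <π x[k₂]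
    have hvk : v.get ⟨k₂, hk₂v⟩ = x.get ⟨k₂, h₂⟩ := by
      have h' : k₂ < (v.take k₁).length := by
        simp [Nat.min_eq_left hk₁v.le]; omega
      have heq : v.take k₁ = x.take k₁ := htake₁.symm.trans hctx₁
      have := List.getElem_of_eq heq h'
      simpa [List.getElem_take, List.get_eq_getElem] using this
    rw [hvk, hwx] at hlt₂
    letI := π (v.take k₂)
    exact lt_irrefl _ hlt₂

/-- For every string `x` with `|x| ≤ n`, the set `Rng x` of rows of `M*(s)`
prefixed by `x` is a contiguous interval of row indices. -/
theorem rng_isInterval {α : Type*} [Fintype α] [Nonempty α] [DecidableEq α]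
    (π : List α → LinearOrder α) (s : List α) (hprim : IsPrimitive s)
    (M : SortedRotMatrix π s) (x : List α) (hx : x.length ≤ s.length) :
    ∀ i j k : Fin s.length, i ∈ Rng M x → j ∈ Rng M x → i ≤ k → k ≤ j → k ∈ Rng M x := by
  intro i j k hi hj hik hkj
  simp only [Rng, Finset.mem_filter, Finset.mem_univ, true_and] at hi hj ⊢
  rcases eq_or_lt_of_le hik with rfl | hik
  · exact hi
  rcases eq_or_lt_of_le hkj with rfl | hkj
  · exact hj
  exact caLt_sandwich π hi hj (M.sorted i k hik) (M.sorted k j hkj)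
end

section
/- Let s be a primitive string of length n over Σ, π a context adaptive ordering family, and x a string with |x| < n and Rng(x) ≠ ∅. For every character c ∈ Σ with Rng(xc) ≠ ∅, one has Rng(xc) = { b_x + Σ_{d <_{π_x} c} ℓ_{xd} + t : 0 ≤ t < ℓ_{xc} }, where the sum ranges over all characters d ∈ Σ that are π_x-smaller than c, b_x = min Rng(x), and ℓ_{xd} = |Rng(xd)| (with ℓ_{xd} = 0 when Rng(xd) = ∅). -/
/-!
Because `≺` compares two strings at their longest common prefix, the rows of `M*(s)` having `x`
as a prefix form an interval of row indices, and on that interval the column at position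
`|x| + 1` is monotone for `π x`. The rows with prefix `xc` are the fibre of that column over
`c`, hence a block of the interval, preceded inside it exactly by the blocks of the `xd` with
`d <_{π x} c`.
-/

namespace List

variable {α : Type*}

theorem getElem_eq_getElem_of_take_eq {u v : List α} {k j : ℕ} (h : u.take k = v.take k)
    (hj : j < k) (hju : j < u.length) (hjv : j < v.length) : u[j] = v[j] := by
  rw [getElem_take' hju hj, getElem_take' hjv hj]
  simp only [h]

theorem IsPrefix.of_take_eq {x u v : List α} {k : ℕ} (hxu : x <+: u) (hk : x.length ≤ k)
    (h : u.take k = v.take k) : x <+: v :=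
  (prefix_take_iff.mp (h ▸ prefix_take_iff.mpr ⟨hxu, hk⟩)).1

theorem prefix_append_singleton_iff {x l : List α} {d : α} (h : x.length < l.length) :
    x ++ [d] <+: l ↔ x <+: l ∧ l[x.length] = d := by
  grind [prefix_iff_getElem]

end List

section caLt

variable {α : Type*} {π : List α → LinearOrder α} {x u v w : List α}

theorem caLt.getElem_le_of_prefix (h : caLt π u v) (hu : x <+: u) (hv : x <+: v)
    (hlu : x.length < u.length) (hlv : x.length < v.length) :
    (π x).le u[x.length] v[x.length] := by
  obtain ⟨k, hku, hkv, htake, hlt⟩ := h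
  simp only [List.get_eq_getElem] at hlt
  rcases lt_trichotomy k x.length with hk | rfl | hk
  · rw [← hu.getElem hk, ← hv.getElem hk] at hlt
    exact absurd hlt (@lt_irrefl _ (π _).toPreorder _)
  · rw [← List.prefix_iff_eq_take.mp hu] at hlt
    exact @le_of_lt _ (π x).toPreorder _ _ hlt
  · exact @le_of_eq _ (π x).toPreorder _ _
      (List.getElem_eq_getElem_of_take_eq htake hk hlu hlv)

theorem prefix_of_caLt_of_caLt (huv : caLt π u v) (hvw : caLt π v w) (hu : x <+: u)
    (hw : x <+: w) : x <+: v := by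
  obtain ⟨k, hku, hkv, htake, hlt⟩ := huv
  simp only [List.get_eq_getElem] at hlt
  by_contra hxv
  have hkx : k < x.length := by
    by_contra! hk
    exact hxv (hu.of_take_eq hk htake)
  have hkw : k < w.length := hkx.trans_le hw.length_le
  -- `y = u.take k` is a prefix of `v` and of `w`, so `v ≺ w` gives `v[k] ≤ w[k] = u[k]`
  set y := u.take k
  have hy : y.length = k := List.length_take_of_le hku.le
  have hyv : y <+: v := htake ▸ List.take_prefix k v
  have hyw : y <+: w :=
    (List.prefix_of_prefix_length_le (List.take_prefix k u) hu (hy.trans_le hkx.le)).trans hw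
  have hvw' := hvw.getElem_le_of_prefix hyv hyw (hy ▸ hkv) (hy ▸ hkw)
  simp only [hy, ← hw.getElem hkx, hu.getElem hkx] at hvw'
  exact absurd hlt (@not_lt_of_ge _ (π y).toPreorder _ _ hvw')

end caLt

namespace Finset

theorem eq_Icc_min'_max' {ι : Type*} [LinearOrder ι] [LocallyFiniteOrder ι] {S : Finset ι}
    (hS : (S : Set ι).OrdConnected) (hne : S.Nonempty) : S = Icc (S.min' hne) (S.max' hne) := by
  ext i
  rw [mem_Icc]
  exact ⟨fun h => ⟨S.min'_le i h, S.le_max' i h⟩,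
    fun h => hS.out (S.min'_mem hne) (S.max'_mem hne) h⟩

theorem card_filter_lt_eq_sum {ι β : Type*} [Preorder β] [DecidableEq β] [Fintype β]
    [DecidableLT β] (S : Finset ι) (f : ι → β) (c : β) :
    (S.filter (f · < c)).card = ∑ d ∈ univ.filter (· < c), (S.filter (f · = d)).card := by
  rw [card_eq_sum_card_fiberwise (f := f) (t := univ.filter (· < c))
    fun i hi => mem_filter.mpr ⟨mem_univ _, (mem_filter.mp hi).2⟩]
  refine sum_congr rfl fun d hd => ?_
  rw [filter_filter]
  refine congrArg card (filter_congr fun i _ => ?_)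
  exact ⟨And.right, fun hfi => ⟨(mem_filter.mp hd).2.trans_eq' hfi.symm, hfi⟩⟩

theorem ordConnected_filter_eq_of_monotoneOn {ι β : Type*} [Preorder ι] [PartialOrder β]
    [DecidableEq β] {S : Finset ι} {f : ι → β} (hS : (S : Set ι).OrdConnected)
    (hf : MonotoneOn f S) (c : β) : (S.filter (f · = c) : Set ι).OrdConnected := by
  refine Set.ordConnected_def.mpr fun i hi k hk j hj => ?_
  simp only [coe_filter] at hi hk ⊢
  have hjS : j ∈ S := hS.out hi.1 hk.1 hj
  exact ⟨hjS, le_antisymm (hk.2 ▸ hf hjS hk.1 hj.2) (hi.2 ▸ hf hi.1 hjS hj.1)⟩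

end Finset

namespace Fin

theorem mem_filter_eq_iff_of_monotoneOn {n : ℕ} {β : Type*} [PartialOrder β] [DecidableEq β]
    [DecidableLT β] {S : Finset (Fin n)} {f : Fin n → β} (hS : (S : Set (Fin n)).OrdConnected)
    (hne : S.Nonempty) (hf : MonotoneOn f S) (c : β) (i : Fin n) :
    i ∈ S.filter (f · = c) ↔ ∃ t < (S.filter (f · = c)).card,
      (i : ℕ) = S.min' hne + (S.filter (f · < c)).card + t := by
  set L := S.filter (f · = c)
  rcases L.eq_empty_or_nonempty with hL | hL
  · simp [hL]
  set m := L.min' hL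
  set m' := L.max' hL
  have hLI : L = Finset.Icc m m' :=
    L.eq_Icc_min'_max' (Finset.ordConnected_filter_eq_of_monotoneOn hS hf c) hL
  obtain ⟨hmS, hfm⟩ := Finset.mem_filter.mp (L.min'_mem hL)
  have hbm : S.min' hne ≤ m := S.min'_le m hmS
  have hmm' : m ≤ m' := L.min'_le m' (L.max'_mem hL)
  have hbelow : S.filter (f · < c) = Finset.Ico (S.min' hne) m := by
    ext j
    simp only [Finset.mem_filter, Finset.mem_Ico]
    constructor
    · rintro ⟨hj, hfj⟩
      exact ⟨S.min'_le j hj, lt_of_not_ge fun hmj => (hfm ▸ hf hmS hj hmj).not_gt hfj⟩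
    · rintro ⟨hbj, hjm⟩
      have hj : j ∈ S := hS.out (S.min'_mem hne) hmS ⟨hbj, hjm.le⟩
      refine ⟨hj, (hfm ▸ hf hj hmS hjm.le).lt_of_ne fun hfj => ?_⟩
      exact (L.min'_le j (Finset.mem_filter.mpr ⟨hj, hfj⟩)).not_gt hjm
  rw [hLI, hbelow, Finset.mem_Icc, Fin.card_Icc, Fin.card_Ico, Fin.le_def, Fin.le_def]
  rw [Fin.le_def] at hbm hmm'
  constructor
  · rintro ⟨h₁, h₂⟩
    exact ⟨i - m, by omega, by omega⟩
  · rintro ⟨t, ht, hi⟩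
    omega

end Fin

namespace SortedRotMatrix

variable {α : Type*} {π : List α → LinearOrder α} {s : List α} (M : SortedRotMatrix π s)

theorem length_row (i : Fin s.length) : (M.row i).length = s.length := by
  obtain ⟨r, hr⟩ := M.row_is_rot i
  simp [hr, rot, r.isLt.le]

def col (k i : Fin s.length) : α := (M.row i)[(k : ℕ)]'(k.isLt.trans_eq (M.length_row i).symm)

variable [DecidableEq α]

theorem mem_rng {x : List α} {i : Fin s.length} : i ∈ Rng M x ↔ x <+: M.row i := by
  simp [Rng]

theorem ordConnected_rng (x : List α) : (Rng M x : Set (Fin s.length)).OrdConnected := by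
  refine Set.ordConnected_def.mpr fun i hi k hk j ⟨hij, hjk⟩ => ?_
  simp only [Finset.mem_coe, mem_rng] at hi hk ⊢
  rcases hij.eq_or_lt with rfl | hij
  · exact hi
  rcases hjk.eq_or_lt with rfl | hjk
  · exact hk
  exact prefix_of_caLt_of_caLt (M.sorted _ _ hij) (M.sorted _ _ hjk) hi hk

theorem rng_append_singleton {x : List α} (hx : x.length < s.length) (d : α) :
    Rng M (x ++ [d]) = (Rng M x).filter (M.col ⟨x.length, hx⟩ · = d) := by
  ext i
  rw [Finset.mem_filter, mem_rng, mem_rng]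
  exact List.prefix_append_singleton_iff _

theorem monotoneOn_col_rng {x : List α} (hx : x.length < s.length) :
    @MonotoneOn _ _ _ (π x).toPreorder (M.col ⟨x.length, hx⟩) (Rng M x) := by
  intro i hi j hj hij
  rw [Finset.mem_coe, mem_rng] at hi hj
  rcases hij.eq_or_lt with rfl | hij
  · exact (π x).le_refl _
  · exact (M.sorted i j hij).getElem_le_of_prefix hi hj _ _

end SortedRotMatrix

open scoped Classical in
theorem rng_append_char_general {α : Type*} [Fintype α] [DecidableEq α]
    (π : List α → LinearOrder α) (s : List α)
    (M : SortedRotMatrix π s) (x : List α) (hx : x.length < s.length)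
    (hne : (Rng M x).Nonempty) (c : α) :
    ∀ i : Fin s.length, i ∈ Rng M (x ++ [c]) ↔
      ∃ t < (Rng M (x ++ [c])).card,
        (i : ℕ) = ((Rng M x).min' hne : ℕ)
          + (∑ d ∈ Finset.univ.filter (fun d => (π x).lt d c), (Rng M (x ++ [d])).card)
          + t := by
  let := π x
  intro i
  simp only [M.rng_append_singleton hx]
  rw [← Finset.card_filter_lt_eq_sum]
  exact Fin.mem_filter_eq_iff_of_monotoneOn (M.ordConnected_rng x) hne (M.monotoneOn_col_rng hx)
    c i

open scoped Classical in
/-- Given `Rng x` nonempty and `c ∈ Σ` with `Rng (xc)` nonempty, the range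
`Rng (xc)` is `{ b_x + Σ_{d <_{π_x} c} ℓ_{xd} + t : 0 ≤ t < ℓ_{xc} }`, where
`b_x = min (Rng x)` and `ℓ_{xd} = |Rng (xd)|`. -/
theorem rng_append_char {α : Type*} [Fintype α] [Nonempty α] [DecidableEq α]
    (π : List α → LinearOrder α) (s : List α) (hprim : IsPrimitive s)
    (M : SortedRotMatrix π s) (x : List α) (hx : x.length < s.length)
    (hne : (Rng M x).Nonempty) (c : α) (hc : (Rng M (x ++ [c])).Nonempty) :
    ∀ i : Fin s.length, i ∈ Rng M (x ++ [c]) ↔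
      ∃ t < (Rng M (x ++ [c])).card,
        (i : ℕ) = ((Rng M x).min' hne : ℕ)
          + (∑ d ∈ Finset.univ.filter (fun d => (π x).lt d c), (Rng M (x ++ [d])).card)
          + t :=
  rng_append_char_general π s M x hx hne c
end

section
/- Let s be a primitive string of length n over Σ, π a context adaptive ordering family, a ∈ Σ a character, and y a string with |y| < n. Then the number of rows of M*(s) prefixed by the string a·y equals the number of indices i ∈ Rng(y) with L[i] = a, i.e., |Rng(a·y)| = #{ i ∈ Rng(y) : L[i] = a }. -/
/-- The number of rows of `M*(s)` prefixed by `a·y` equals the number of row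
indices `i ∈ Rng y` whose last symbol `L[i]` is `a`. -/
theorem rng_cons_card {α : Type*} [Fintype α] [Nonempty α] [DecidableEq α]
    (π : List α → LinearOrder α) (s : List α) (hprim : IsPrimitive s)
    (M : SortedRotMatrix π s) (a : α) (y : List α) (hy : y.length < s.length) :
    (Rng M (a :: y)).card
      = ((Rng M y).filter (fun i => (M.row i).getLast? = some a)).card := by
  classical
  have hn : 0 < s.length := lt_of_le_of_lt (Nat.zero_le _) hy
  haveI : NeZero s.length := ⟨hn.ne'⟩
  -- rot in terms of List.rotate
  have hrot : ∀ r : Fin s.length, rot s (r : ℕ) = s.rotate r := by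
    intro r
    rw [List.rotate_eq_drop_append_take (le_of_lt r.isLt)]
    rfl
  have hrotlen : ∀ r : Fin s.length, (rot s (r : ℕ)).length = s.length := by
    intro r; simp [rot]
  have hsucc : ∀ r : Fin s.length,
      rot s ((r + 1 : Fin s.length) : ℕ) = (rot s (r : ℕ)).rotate 1 := by
    intro r
    rw [hrot, hrot, List.rotate_rotate]
    have h1 : ((r + 1 : Fin s.length) : ℕ) = (r.val + 1) % s.length := by
      simp [Fin.add_def, Nat.add_mod]
    rw [h1, List.rotate_mod]
  -- the key rotation-level equivalence
  have hkey : ∀ r : Fin s.length,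
      ((a :: y) <+: rot s (r : ℕ)) ↔
        (y <+: rot s ((r + 1 : Fin s.length) : ℕ) ∧
          (rot s ((r + 1 : Fin s.length) : ℕ)).getLast? = some a) := by
    intro r
    constructor
    · rintro ⟨w, hw⟩
      have h1 : rot s ((r + 1 : Fin s.length) : ℕ) = (y ++ w) ++ [a] := by
        rw [hsucc, ← hw]
        simp [List.rotate_cons_succ]
      rw [h1]
      refine ⟨((y.prefix_append w).trans (List.prefix_append _ _)), ?_⟩
      simp
    · rintro ⟨hpre, hlast⟩
      have hne : rot s (r : ℕ) ≠ [] := by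
        intro h
        have := hrotlen r
        rw [h] at this
        simp at this
        omega
      obtain ⟨b, t, hbt⟩ := List.exists_cons_of_ne_nil hne
      have h1 : rot s ((r + 1 : Fin s.length) : ℕ) = t ++ [b] := by
        rw [hsucc, hbt]
        simp [List.rotate_cons_succ]
      rw [h1] at hpre hlast
      have hba : b = a := by
        simpa using hlast
      have hty : y.length ≤ t.length := by
        have h2 := hrotlen r
        rw [hbt] at h2
        simp at h2
        omega
      have hyt : y <+: t := by
        have := List.prefix_iff_eq_take.mp hpre
        rw [List.take_append_of_le_length hty] at this
        rw [this]
        exact List.take_prefix _ _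
      rw [hbt, hba]
      exact List.cons_prefix_cons.mpr ⟨rfl, hyt⟩
  -- rows are pairwise distinct
  have hcairr : ∀ u : List α, ¬ caLt π u u := by
    rintro u ⟨k, hu, hv, _, hlt⟩
    letI := π (u.take k)
    exact lt_irrefl _ hlt
  have hrowinj : Function.Injective M.row := by
    intro i j hij
    by_contra hne
    rcases lt_or_gt_of_ne hne with h | h
    · have hs := M.sorted i j h
      rw [hij] at hs
      exact hcairr _ hs
    · have hs := M.sorted j i h
      rw [hij] at hs
      exact hcairr _ hs
  -- the rotation index of each row
  set g : Fin s.length → Fin s.length := fun i => (M.row_is_rot i).choose with hg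
  have hgspec : ∀ i, M.row i = rot s ((g i : Fin s.length) : ℕ) := fun i =>
    (M.row_is_rot i).choose_spec
  have hginj : Function.Injective g := by
    intro i j hij
    apply hrowinj
    rw [hgspec i, hgspec j, hij]
  have hgbij : Function.Bijective g := Finite.injective_iff_bijective.mp hginj
  set G : Fin s.length ≃ Fin s.length := Equiv.ofBijective g hgbij with hG
  have hrowG : ∀ x : Fin s.length, M.row (G.symm x) = rot s (x : ℕ) := by
    intro x
    rw [hgspec (G.symm x)]
    have : g (G.symm x) = x := G.apply_symm_apply x
    rw [this]
  set Φ : Fin s.length ≃ Fin s.length :=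
    G.trans ((Equiv.addRight (1 : Fin s.length)).trans G.symm) with hΦ
  apply Finset.card_equiv Φ
  intro i
  have hΦi : M.row (Φ i) = rot s ((G i + 1 : Fin s.length) : ℕ) := hrowG _
  simp only [Rng, Finset.mem_filter, Finset.mem_univ, true_and]
  rw [hΦi, hgspec i]
  exact hkey (G i)
end

section
/- Let s be a primitive string of length n over Σ and let π and π' be two context adaptive ordering families such that π_x = π'_x for every string x that is the longest common prefix of some pair of distinct cyclic rotations of s. Then the ≺_π-sorted sequence of the rotations of s equals the ≺_{π'}-sorted sequence of the rotations of s; in particular, BWT*(s) computed with respect to π equals BWT*(s) computed with respect to π'. (Thus the transform depends on at most n of the alphabet orderings.) -/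
/-- `x` is the longest common prefix of `u` and `v`. -/
def IsLCP {α : Type*} (x u v : List α) : Prop :=
  x <+: u ∧ x <+: v ∧ u[x.length]? ≠ v[x.length]?

lemma take_get_eq {α : Type*} {u v : List α} {k k' : ℕ} (h : k < k')
    (he : u.take k' = v.take k') (hu : k < u.length) (hv : k < v.length) :
    u.get ⟨k, hu⟩ = v.get ⟨k, hv⟩ := by
  have := congrArg (fun l => l[k]?) he
  simp only [List.getElem?_take, h, if_pos] at this
  simpa [List.getElem?_eq_getElem, hu, hv, List.get_eq_getElem] using this

lemma caLt_irrefl {α : Type*} (π : List α → LinearOrder α) (u : List α) :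
    ¬ caLt π u u := by
  rintro ⟨k, hu, hv, -, hlt⟩
  exact @lt_irrefl _ (π (u.take k)).toPreorder _ hlt

lemma caLt_asymm {α : Type*} (π : List α → LinearOrder α) {u v : List α}
    (h1 : caLt π u v) (h2 : caLt π v u) : False := by
  obtain ⟨k, hu, hv, he, hlt⟩ := h1
  obtain ⟨k', hv', hu', he', hlt'⟩ := h2
  rcases lt_trichotomy k k' with h | h | h
  · rw [take_get_eq h he'.symm hu hv] at hlt
    exact @lt_irrefl _ (π (u.take k)).toPreorder _ hlt
  · subst h
    rw [he] at hlt
    exact @lt_asymm _ (π (v.take k)).toPreorder _ _ hlt hlt'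
  · rw [take_get_eq h he hu' hv'] at hlt'
    exact @lt_irrefl _ (π (v.take k')).toPreorder _ hlt'

/-- If the two families agree on LCPs of distinct rotations, `caLt π` implies
`caLt π'` on rotations. -/
lemma caLt_transfer {α : Type*} (π π' : List α → LinearOrder α) (s : List α)
    (hagree : ∀ x : List α,
      (∃ r₁ r₂ : Fin s.length, rot s (r₁ : ℕ) ≠ rot s (r₂ : ℕ) ∧
        IsLCP x (rot s (r₁ : ℕ)) (rot s (r₂ : ℕ))) →
      ∀ a b : α, (π x).lt a b ↔ (π' x).lt a b)
    (r₁ r₂ : Fin s.length) (h : caLt π (rot s (r₁ : ℕ)) (rot s (r₂ : ℕ))) :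
    caLt π' (rot s (r₁ : ℕ)) (rot s (r₂ : ℕ)) := by
  set u := rot s (r₁ : ℕ) with hu'
  set v := rot s (r₂ : ℕ) with hv'
  obtain ⟨k, hu, hv, he, hlt⟩ := h
  have hne : u.get ⟨k, hu⟩ ≠ v.get ⟨k, hv⟩ :=
    @ne_of_lt _ (π (u.take k)).toPreorder _ _ hlt
  have huv : u ≠ v := fun h => hne (by simp [List.get_eq_getElem, h])
  have hlcp : IsLCP (u.take k) u v := by
    refine ⟨List.take_prefix _ _, he ▸ List.take_prefix _ _, ?_⟩
    rw [List.length_take, min_eq_left hu.le]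
    simp only [List.getElem?_eq_getElem, hu, hv]
    simpa [List.get_eq_getElem] using hne
  exact ⟨k, hu, hv, he, (hagree _ ⟨r₁, r₂, huv, hlcp⟩ _ _).mp hlt⟩

/-- If two context adaptive ordering families agree on every string that is
the longest common prefix of a pair of distinct cyclic rotations of `s`, then
the two sorted rotation matrices of `s` coincide; in particular the two
context adaptive BWTs of `s` coincide. -/
theorem bwtStar_depends_on_lcp_orders {α : Type*} [Fintype α] [Nonempty α] [DecidableEq α]
    (π π' : List α → LinearOrder α) (s : List α) (hp : IsPrimitive s)
    (hagree : ∀ x : List α,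
      (∃ r₁ r₂ : Fin s.length, rot s (r₁ : ℕ) ≠ rot s (r₂ : ℕ) ∧
        IsLCP x (rot s (r₁ : ℕ)) (rot s (r₂ : ℕ))) →
      ∀ a b : α, (π x).lt a b ↔ (π' x).lt a b)
    (M : SortedRotMatrix π s) (M' : SortedRotMatrix π' s) :
    (∀ i, M.row i = M'.row i) ∧
    (∀ i, (M.row i).getLast? = (M'.row i).getLast?) := by
  have hagree' : ∀ x : List α,
      (∃ r₁ r₂ : Fin s.length, rot s (r₁ : ℕ) ≠ rot s (r₂ : ℕ) ∧
        IsLCP x (rot s (r₁ : ℕ)) (rot s (r₂ : ℕ))) →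
      ∀ a b : α, (π' x).lt a b ↔ (π x).lt a b :=
    fun x hx a b => (hagree x hx a b).symm
  -- injectivity of rows
  have Minj : ∀ i j, M.row i = M.row j → i = j := by
    intro i j hij
    rcases lt_trichotomy i j with h | h | h
    · exact absurd (hij ▸ M.sorted i j h) (caLt_irrefl π _)
    · exact h
    · exact absurd (hij ▸ M.sorted j i h) (caLt_irrefl π _)
  have M'inj : ∀ i j, M'.row i = M'.row j → i = j := by
    intro i j hij
    rcases lt_trichotomy i j with h | h | h
    · exact absurd (hij ▸ M'.sorted i j h) (caLt_irrefl π' _)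
    · exact h
    · exact absurd (hij ▸ M'.sorted j i h) (caLt_irrefl π' _)
  -- matching functions
  have hex : ∀ i, ∃ j, M.row i = M'.row j := by
    intro i
    obtain ⟨r, hr⟩ := M.row_is_rot i
    obtain ⟨j, hj⟩ := M'.rot_is_row r
    exact ⟨j, by rw [hr, ← hj]⟩
  have hex' : ∀ i, ∃ j, M'.row i = M.row j := by
    intro i
    obtain ⟨r, hr⟩ := M'.row_is_rot i
    obtain ⟨j, hj⟩ := M.rot_is_row r
    exact ⟨j, by rw [hr, ← hj]⟩
  choose f hf using hex
  choose g hg using hex'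
  -- f strictly monotone
  have fmono : StrictMono f := by
    intro i j hij
    have h1 : caLt π (M.row i) (M.row j) := M.sorted i j hij
    obtain ⟨r₁, hr₁⟩ := M.row_is_rot i
    obtain ⟨r₂, hr₂⟩ := M.row_is_rot j
    have h2 : caLt π' (M.row i) (M.row j) := by
      rw [hr₁, hr₂] at h1 ⊢
      exact caLt_transfer π π' s hagree r₁ r₂ h1
    rw [hf i, hf j] at h2
    rcases lt_trichotomy (f i) (f j) with h | h | h
    · exact h
    · exact absurd h2 (h ▸ caLt_irrefl π' _)
    · exact absurd (caLt_asymm π' h2 (M'.sorted _ _ h)) id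
  have gmono : StrictMono g := by
    intro i j hij
    have h1 : caLt π' (M'.row i) (M'.row j) := M'.sorted i j hij
    obtain ⟨r₁, hr₁⟩ := M'.row_is_rot i
    obtain ⟨r₂, hr₂⟩ := M'.row_is_rot j
    have h2 : caLt π (M'.row i) (M'.row j) := by
      rw [hr₁, hr₂] at h1 ⊢
      exact caLt_transfer π' π s hagree' r₁ r₂ h1
    rw [hg i, hg j] at h2
    rcases lt_trichotomy (g i) (g j) with h | h | h
    · exact h
    · exact absurd h2 (h ▸ caLt_irrefl π _)
    · exact absurd (caLt_asymm π h2 (M.sorted _ _ h)) id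
  have hgf : ∀ i, g (f i) = i := by
    intro i
    apply Minj
    rw [← hg (f i), ← hf i]
  have hfi : ∀ i, f i = i := by
    intro i
    haveI : WellFoundedLT (Fin s.length) := inferInstance
    have h1 : i ≤ f i := fmono.le_apply
    have h2 : f i ≤ g (f i) := gmono.le_apply
    rw [hgf i] at h2
    exact le_antisymm h2 h1
  have key : ∀ i, M.row i = M'.row i := fun i => by rw [hf i, hfi i]
  exact ⟨key, fun i => by rw [key i]⟩
end

section
/- Let s be a primitive string of length n ≥ 2 over Σ, let π be a local ordering family (of order 1), and let x1, x2 ∈ Σ. The map that sends a cyclic rotation w of s to its right cyclic shift (its last symbol moved to the front) restricts to a bijection from the set of rotations of s whose first symbol is x2 and whose last symbol is x1 onto the set of rotations of s having x1x2 as a prefix, and this bijection is order preserving with respect to ≺: if w ≺ w' then shift(w) ≺ shift(w'). -/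
/-- `π` is a local ordering family (of order 1): the order `π x` depends only on
the last symbol of `x` (for nonempty `x`). -/
def IsLocalOrdering {α : Type*} (π : List α → LinearOrder α) : Prop :=
  ∀ x y : List α, x ≠ [] → y ≠ [] → x.getLast? = y.getLast? →
    ∀ a b : α, (π x).lt a b ↔ (π y).lt a b

/-- The right cyclic shift of `w`: its last symbol moved to the front. -/
def rshift {α : Type*} (w : List α) : List α := rot w (w.length - 1)

/-!
A rotation of `s` that starts with `x₂` and ends with `x₁` has the shape `x₂ m x₁`, and its right
shift `x₁ x₂ m` is again a rotation; rotating left by one inverts the shift. Two such words share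
their first and last symbols, so they first differ inside `x₂ m`, after a nonempty common prefix
`x₂ y`. Their shifts first differ at the next position, after the common prefix `x₁ x₂ y`, which
ends with the same symbol as `x₂ y`; so a local ordering compares the differing symbols the same way.
-/

section Rotations

variable {α : Type*}

theorem rot_eq_rotate (s : List α) {r : ℕ} (h : r ≤ s.length) : rot s r = s.rotate r :=
  (List.rotate_eq_drop_append_take h).symm

theorem length_eq_of_exists_rot {s w : List α} (h : ∃ r : Fin s.length, w = rot s r) :
    w.length = s.length := by
  obtain ⟨r, rfl⟩ := h
  simp only [rot, List.length_append, List.length_drop, List.length_take]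
  omega

theorem exists_rot_rotate {s w : List α} (h : ∃ r : Fin s.length, w = rot s r) (k : ℕ) :
    ∃ r : Fin s.length, w.rotate k = rot s r := by
  obtain ⟨r, rfl⟩ := h
  have hpos : 0 < s.length := r.pos
  refine ⟨⟨(r + k) % s.length, Nat.mod_lt _ hpos⟩, ?_⟩
  rw [rot_eq_rotate s r.is_lt.le, List.rotate_rotate, rot_eq_rotate s (Nat.mod_lt _ hpos).le,
    List.rotate_mod]

theorem rshift_eq_rotate (w : List α) : rshift w = w.rotate (w.length - 1) :=
  rot_eq_rotate w (Nat.sub_le _ _)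

theorem rshift_append_singleton (l : List α) (x : α) : rshift (l ++ [x]) = x :: l := by
  simp [rshift_eq_rotate, List.rotate_append_length_eq]

theorem rshift_injective : Function.Injective (rshift : List α → List α) := by
  intro w w' h
  have hlen : w.length = w'.length := by
    simpa only [rshift_eq_rotate, List.length_rotate] using congrArg List.length h
  rw [rshift_eq_rotate, rshift_eq_rotate, hlen] at h
  exact List.rotate_eq_rotate.mp h

theorem exists_eq_cons_append_singleton {w : List α} {a b : α} (hw : 2 ≤ w.length)
    (ha : w.head? = some a) (hb : w.getLast? = some b) : ∃ m, w = a :: m ++ [b] := by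
  obtain rfl | ⟨l, c, rfl⟩ := w.eq_nil_or_concat
  · simp at hw
  obtain rfl : c = b := by simpa using hb
  cases l with
  | nil => simp at hw
  | cons d m =>
    obtain rfl : d = a := by simpa using ha
    exact ⟨m, List.concat_eq_append ..⟩

end Rotations

section ContextAdaptiveOrder

variable {α : Type*} (π : List α → LinearOrder α)

theorem caLt_of_append_singleton {u v : List α} {b : α} (hlen : u.length = v.length)
    (h : caLt π (u ++ [b]) (v ++ [b])) : caLt π u v := by
  obtain ⟨k, hku, hkv, htake, hlt⟩ := h
  have hk : k < u.length := by
    refine lt_of_le_of_ne (by simpa [Nat.lt_succ_iff] using hku) ?_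
    rintro rfl
    simp only [List.get_eq_getElem, List.getElem_concat_length, hlen] at hlt
    exact @lt_irrefl α (π _).toPreorder b hlt
  have hk' : k < v.length := hlen ▸ hk
  rw [List.take_append_of_le_length hk.le, List.take_append_of_le_length hk'.le] at htake
  rw [List.take_append_of_le_length hk.le] at hlt
  refine ⟨k, hk, hk', htake, ?_⟩
  simpa [List.getElem_append_left hk, List.getElem_append_left hk'] using hlt

theorem IsLocalOrdering.caLt_cons_cons (hloc : IsLocalOrdering π) {u v : List α} (a b : α)
    (h : caLt π (a :: u) (a :: v)) : caLt π (b :: a :: u) (b :: a :: v) := by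
  obtain ⟨_ | k, hku, hkv, htake, hlt⟩ := h
  · exact absurd hlt (@lt_irrefl α (π _).toPreorder a)
  have hctx := hloc (b :: a :: u.take k) (a :: u.take k) (by simp) (by simp) List.getLast?_cons_cons
  rw [List.take_succ_cons] at hlt
  refine ⟨k + 2, by simpa using hku, by simpa using hkv, by simpa using htake, ?_⟩
  rw [List.take_succ_cons, List.take_succ_cons]
  exact (hctx _ _).mpr hlt

end ContextAdaptiveOrder

theorem rshift_bijection_order_preserving_general {α : Type*}
    (π : List α → LinearOrder α) (hloc : IsLocalOrdering π)
    (s : List α) (hn : 2 ≤ s.length) (x1 x2 : α) :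
    (∀ w : List α,
      ((∃ r : Fin s.length, w = rot s (r : ℕ)) ∧
        w.head? = some x2 ∧ w.getLast? = some x1) →
      ((∃ r : Fin s.length, rshift w = rot s (r : ℕ)) ∧ [x1, x2] <+: rshift w)) ∧
    (∀ w w' : List α,
      ((∃ r : Fin s.length, w = rot s (r : ℕ)) ∧
        w.head? = some x2 ∧ w.getLast? = some x1) →
      ((∃ r : Fin s.length, w' = rot s (r : ℕ)) ∧
        w'.head? = some x2 ∧ w'.getLast? = some x1) →
      rshift w = rshift w' → w = w') ∧
    (∀ v : List α,
      ((∃ r : Fin s.length, v = rot s (r : ℕ)) ∧ [x1, x2] <+: v) →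
      ∃ w : List α,
        ((∃ r : Fin s.length, w = rot s (r : ℕ)) ∧
          w.head? = some x2 ∧ w.getLast? = some x1) ∧ rshift w = v) ∧
    (∀ w w' : List α,
      ((∃ r : Fin s.length, w = rot s (r : ℕ)) ∧
        w.head? = some x2 ∧ w.getLast? = some x1) →
      ((∃ r : Fin s.length, w' = rot s (r : ℕ)) ∧
        w'.head? = some x2 ∧ w'.getLast? = some x1) →
      caLt π w w' → caLt π (rshift w) (rshift w')) := by
  have shape : ∀ w : List α, (∃ r : Fin s.length, w = rot s r) → w.head? = some x2 →
      w.getLast? = some x1 → ∃ m, w = x2 :: m ++ [x1] := fun w hw ha hb =>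
    exists_eq_cons_append_singleton (length_eq_of_exists_rot hw ▸ hn) ha hb
  refine ⟨?_, fun w w' _ _ h => rshift_injective h, ?_, ?_⟩
  · rintro w ⟨hw, ha, hb⟩
    obtain ⟨m, rfl⟩ := shape w hw ha hb
    refine ⟨rshift_eq_rotate _ ▸ exists_rot_rotate hw _, ?_⟩
    rw [rshift_append_singleton]
    exact List.prefix_append [x1, x2] m
  · rintro v ⟨hv, t, rfl⟩
    refine ⟨x2 :: t ++ [x1], ⟨?_, rfl, List.getLast?_concat⟩, rshift_append_singleton _ _⟩
    simpa using exists_rot_rotate hv 1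
  · rintro w w' ⟨hw, ha, hb⟩ ⟨hw', ha', hb'⟩ h
    obtain ⟨m, rfl⟩ := shape w hw ha hb
    obtain ⟨m', rfl⟩ := shape w' hw' ha' hb'
    have hlen : (x2 :: m).length = (x2 :: m').length := by
      simpa using (length_eq_of_exists_rot hw).trans (length_eq_of_exists_rot hw').symm
    rw [rshift_append_singleton, rshift_append_singleton]
    exact hloc.caLt_cons_cons π x2 x1 (caLt_of_append_singleton π hlen h)

/-- For a local ordering family (of order 1) and any `x₁ x₂ ∈ Σ`, the right
cyclic shift restricts to a bijection from the rotations of `s` starting with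
`x₂` and ending with `x₁` onto the rotations of `s` having `x₁x₂` as a prefix,
and this bijection is order preserving w.r.t. the induced order `≺`. -/
theorem rshift_bijection_order_preserving {α : Type*} [Fintype α] [Nonempty α] [DecidableEq α]
    (π : List α → LinearOrder α) (hloc : IsLocalOrdering π)
    (s : List α) (hn : 2 ≤ s.length) (hp : IsPrimitive s) (x1 x2 : α) :
    (∀ w : List α,
      ((∃ r : Fin s.length, w = rot s (r : ℕ)) ∧
        w.head? = some x2 ∧ w.getLast? = some x1) →
      ((∃ r : Fin s.length, rshift w = rot s (r : ℕ)) ∧ [x1, x2] <+: rshift w)) ∧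
    (∀ w w' : List α,
      ((∃ r : Fin s.length, w = rot s (r : ℕ)) ∧
        w.head? = some x2 ∧ w.getLast? = some x1) →
      ((∃ r : Fin s.length, w' = rot s (r : ℕ)) ∧
        w'.head? = some x2 ∧ w'.getLast? = some x1) →
      rshift w = rshift w' → w = w') ∧
    (∀ v : List α,
      ((∃ r : Fin s.length, v = rot s (r : ℕ)) ∧ [x1, x2] <+: v) →
      ∃ w : List α,
        ((∃ r : Fin s.length, w = rot s (r : ℕ)) ∧
          w.head? = some x2 ∧ w.getLast? = some x1) ∧ rshift w = v) ∧
    (∀ w w' : List α,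
      ((∃ r : Fin s.length, w = rot s (r : ℕ)) ∧
        w.head? = some x2 ∧ w.getLast? = some x1) →
      ((∃ r : Fin s.length, w' = rot s (r : ℕ)) ∧
        w'.head? = some x2 ∧ w'.getLast? = some x1) →
      caLt π w w' → caLt π (rshift w) (rshift w')) :=
  rshift_bijection_order_preserving_general π hloc s hn x1 x2
end

section
/- Let S_1, …, S_h (h ≥ 2) be nonempty finite sets of nonempty strings over Σ. For 1 ≤ k ≤ h and characters a, b ∈ Σ, define M[k,a,b] ∈ ℕ∞ (extended naturals) as the infimum of runs(y_1 y_2 ⋯ y_k) over all choices y_t ∈ S_t for 1 ≤ t ≤ k such that y_1 starts with a and y_k ends with b (with M[k,a,b] = ⊤ if no such choice exists), and define ρ_k(d,b) ∈ ℕ∞ as the infimum of runs(y) over all y ∈ S_k starting with d and ending with b. Then for every k with 2 ≤ k ≤ h and all a, b ∈ Σ: M[k,a,b] = min over c, d ∈ Σ of ( M[k−1,a,c] + ρ_k(d,b) − δ_{cd} ), where δ_{cd} = 1 if c = d and δ_{cd} = 0 otherwise (subtraction is truncated subtraction in ℕ∞). -/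
/-- The number of maximal runs of equal consecutive symbols in a string:
the number of positions `i` such that `i = 1` or `z[i] ≠ z[i−1]`. -/
def runs {α : Type*} [DecidableEq α] : List α → ℕ
  | [] => 0
  | [_] => 1
  | a :: b :: l => (if a = b then 0 else 1) + runs (b :: l)

/-- `M[k,a,b]`: the infimum in `ℕ∞` of `runs (y₁ ⋯ y_k)` over all choices
`y_t ∈ S t` (`t = 0, …, k−1`, 0-based) such that `y₁` starts with `a` and
`y_k` ends with `b` (`⊤` if no such choice exists). -/
noncomputable def chainRuns {α : Type*} [DecidableEq α]
    (S : ℕ → Finset (List α)) (k : ℕ) (a b : α) : ℕ∞ :=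
  sInf { m : ℕ∞ | ∃ ys : List (List α), ys.length = k ∧
    (∀ (t : ℕ) (ht : t < ys.length), ys.get ⟨t, ht⟩ ∈ S t) ∧
    (∃ y₁, ys.head? = some y₁ ∧ y₁.head? = some a) ∧
    (∃ yk, ys.getLast? = some yk ∧ yk.getLast? = some b) ∧
    m = (runs ys.flatten : ℕ∞) }

/-- `ρ_k(d,b)`: the infimum in `ℕ∞` of `runs y` over `y ∈ S k` starting with
`d` and ending with `b` (`⊤` if no such `y` exists). -/
noncomputable def rhoRuns {α : Type*} [DecidableEq α]
    (S : ℕ → Finset (List α)) (k : ℕ) (d b : α) : ℕ∞ :=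
  sInf { m : ℕ∞ | ∃ y ∈ S k, y.head? = some d ∧ y.getLast? = some b ∧
    m = (runs y : ℕ∞) }

/-! A chain `y₁ ⋯ y_k` splits into the chain `y₁ ⋯ y_{k−1}`, ending in some symbol `c`, and the
string `y_k`, starting with some `d`; conversely any such pair concatenates to a chain. The runs of
the concatenation are those of the two parts, except that the two boundary runs merge exactly when
`c = d`. Taking infima gives the recurrence: infima of nonempty sets in `ℕ∞` are attained, and an
empty one makes the corresponding term `⊤`. -/

section Runs

variable {α : Type*} [DecidableEq α]

theorem runs_append_add_ite {y : List α} {c d : α} (hy : y.head? = some d) :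
    ∀ {x : List α}, x.getLast? = some c →
      runs (x ++ y) + (if c = d then 1 else 0) = runs x + runs y
  | [], hx => by simp at hx
  | [e], hx => by
    obtain rfl : e = c := by simpa using hx
    obtain ⟨y, rfl⟩ : ∃ t, y = d :: t := by
      cases y <;> simp_all
    simp only [List.singleton_append, runs]
    split_ifs <;> omega
  | e :: f :: x, hx => by
    have ih := runs_append_add_ite hy (x := f :: x) (by simpa using hx)
    simp only [List.cons_append] at ih ⊢
    simp only [runs]
    omega

theorem runs_append {x y : List α} {c d : α} (hx : x.getLast? = some c)
    (hy : y.head? = some d) :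
    (runs (x ++ y) : ℕ∞) = runs x + runs y - (if c = d then 1 else 0) := by
  rw [← Nat.cast_add, ← runs_append_add_ite hy hx]
  split_ifs <;> norm_cast

end Runs

theorem List.getLast?_flatten_of_getLast? {α : Type*} {L : List (List α)} {l : List α} {b : α}
    (hL : L.getLast? = some l) (hl : l.getLast? = some b) : L.flatten.getLast? = some b := by
  obtain ⟨L, rfl⟩ := List.getLast?_eq_some_iff.mp hL
  simp [List.getLast?_append, hl]

theorem ENat.le_sInf_add_sInf_tsub {A B : Set ℕ∞} {m δ : ℕ∞} (hδ : δ ≠ ⊤)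
    (h : ∀ x ∈ A, ∀ y ∈ B, m ≤ x + y - δ) : m ≤ sInf A + sInf B - δ := by
  rcases A.eq_empty_or_nonempty with rfl | hA
  · simp [ENat.sub_eq_top_iff.mpr ⟨rfl, hδ⟩]
  rcases B.eq_empty_or_nonempty with rfl | hB
  · simp [ENat.sub_eq_top_iff.mpr ⟨rfl, hδ⟩]
  exact h _ (csInf_mem hA) _ (csInf_mem hB)

section Chains

variable {α : Type*} {S : ℕ → Finset (List α)}

def IsRunChain (S : ℕ → Finset (List α)) (k : ℕ) (a b : α) (ys : List (List α)) : Prop :=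
  ys.length = k ∧ (∀ (t : ℕ) (ht : t < ys.length), ys.get ⟨t, ht⟩ ∈ S t) ∧
    (∃ y₁, ys.head? = some y₁ ∧ y₁.head? = some a) ∧
    (∃ yk, ys.getLast? = some yk ∧ yk.getLast? = some b)

theorem IsRunChain.flatten_getLast? {k : ℕ} {a b : α} {ys : List (List α)}
    (h : IsRunChain S k a b ys) : ys.flatten.getLast? = some b :=
  let ⟨_, hyk, hb⟩ := h.2.2.2
  List.getLast?_flatten_of_getLast? hyk hb

theorem IsRunChain.append_singleton {n : ℕ} {a b c : α} {zs : List (List α)} {y : List α}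
    (hzs : IsRunChain S n a c zs) (hy : y ∈ S n) (hb : y.getLast? = some b) :
    IsRunChain S (n + 1) a b (zs ++ [y]) := by
  obtain ⟨hlen, hmem, ⟨y₁, hy₁, ha⟩, -⟩ := hzs
  refine ⟨by simp [hlen], fun t ht => ?_, ⟨y₁, ?_, ha⟩, ⟨y, List.getLast?_concat, hb⟩⟩
  · simp only [List.get_eq_getElem, List.getElem_append]
    split_ifs with htz
    · simpa using hmem t htz
    · simp only [List.length_append, List.length_singleton] at ht
      simpa [show t = n by omega] using hy
  · simp [List.head?_append, hy₁]

theorem IsRunChain.of_append_singleton {n : ℕ} {a b : α} {zs : List (List α)} {y : List α}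
    (h : IsRunChain S (n + 1) a b (zs ++ [y])) (hn : 1 ≤ n) (hS : ∀ z ∈ S (n - 1), z ≠ []) :
    ∃ c, IsRunChain S n a c zs ∧ y ∈ S n ∧ y.getLast? = some b := by
  obtain ⟨hlen, hmem, ⟨y₁, hy₁, ha⟩, ⟨yk, hyk, hb⟩⟩ := h
  have hlen' : zs.length = n := by simpa using hlen
  have hzs : zs ≠ [] := List.ne_nil_of_length_pos (by omega)
  have hmem' (t : ℕ) (ht : t < zs.length) : zs.get ⟨t, ht⟩ ∈ S t := by
    simpa [List.getElem_append_left ht] using hmem t (by simp; omega)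
  have hz : zs.getLast hzs ∈ S (n - 1) := by
    simpa [List.getLast_eq_getElem, hlen'] using hmem' (n - 1) (by omega)
  obtain rfl : yk = y := by simpa using hyk.symm
  refine ⟨(zs.getLast hzs).getLast (hS _ hz), ⟨hlen', hmem', ⟨y₁, ?_, ha⟩,
    ⟨_, List.getLast?_eq_some_getLast hzs, List.getLast?_eq_some_getLast _⟩⟩, ?_, hb⟩
  · simpa [List.head?_append, List.head?_eq_some_head hzs] using hy₁
  · simpa [hlen'] using hmem zs.length (by simp)

variable [DecidableEq α]

theorem chainRuns_eq_sInf (S : ℕ → Finset (List α)) (k : ℕ) (a b : α) :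
    chainRuns S k a b = sInf {m : ℕ∞ | ∃ ys, IsRunChain S k a b ys ∧ m = runs ys.flatten} := by
  simp only [chainRuns, IsRunChain, and_assoc]

theorem chainRuns_le {k : ℕ} {a b : α} {ys : List (List α)} (h : IsRunChain S k a b ys) :
    chainRuns S k a b ≤ runs ys.flatten := by
  rw [chainRuns_eq_sInf]
  exact sInf_le ⟨ys, h, rfl⟩

theorem rhoRuns_le {k : ℕ} {d b : α} {y : List α} (hy : y ∈ S k) (hd : y.head? = some d)
    (hb : y.getLast? = some b) : rhoRuns S k d b ≤ runs y :=
  sInf_le ⟨y, hy, hd, hb, rfl⟩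

theorem chainRuns_succ_le (n : ℕ) (a b c d : α) :
    chainRuns S (n + 1) a b ≤
      chainRuns S n a c + rhoRuns S n d b - (if c = d then 1 else 0) := by
  rw [chainRuns_eq_sInf S n]
  refine ENat.le_sInf_add_sInf_tsub (by split_ifs <;> simp) ?_
  rintro _ ⟨zs, hzs, rfl⟩ _ ⟨y, hy, hd, hb, rfl⟩
  calc chainRuns S (n + 1) a b ≤ runs (zs ++ [y]).flatten :=
        chainRuns_le (hzs.append_singleton hy hb)
    _ = runs zs.flatten + runs y - (if c = d then 1 else 0) := by
        rw [List.flatten_concat, runs_append hzs.flatten_getLast? hd]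

theorem iInf_le_chainRuns_succ {n : ℕ} (hn : 1 ≤ n) (hS : ∀ z ∈ S (n - 1), z ≠ []) (a b : α) :
    ⨅ (c : α), ⨅ (d : α),
        (chainRuns S n a c + rhoRuns S n d b - (if c = d then 1 else 0)) ≤
      chainRuns S (n + 1) a b := by
  rw [chainRuns_eq_sInf S (n + 1)]
  refine le_sInf ?_
  rintro _ ⟨ys, hys, rfl⟩
  obtain ⟨zs, y, rfl⟩ : ∃ zs y, ys = zs ++ [y] := by
    rcases ys.eq_nil_or_concat' with rfl | h
    · simp [IsRunChain] at hys
    · exact h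
  obtain ⟨c, hzs, hyS, hb⟩ := hys.of_append_singleton hn hS
  have hy : y.head? = some (y.head (by rintro rfl; simp at hb)) := List.head?_eq_some_head _
  calc ⨅ (c : α), ⨅ (d : α), (chainRuns S n a c + rhoRuns S n d b - (if c = d then 1 else 0))
      ≤ chainRuns S n a c + rhoRuns S n _ b - _ := iInf₂_le _ _
    _ ≤ runs zs.flatten + runs y - _ := by
        gcongr
        · exact chainRuns_le hzs
        · exact rhoRuns_le hyS hy hb
    _ = runs (zs ++ [y]).flatten := by
        rw [List.flatten_concat, runs_append hzs.flatten_getLast? hy]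

end Chains

theorem chainRuns_recurrence_general {α : Type*} [DecidableEq α]
    (h : ℕ) (S : ℕ → Finset (List α))
    (hSstr : ∀ j < h, ∀ z ∈ S j, z ≠ [])
    (k : ℕ) (hk2 : 2 ≤ k) (hkh : k ≤ h) (a b : α) :
    chainRuns S k a b =
      ⨅ (c : α), ⨅ (d : α),
        (chainRuns S (k - 1) a c + rhoRuns S (k - 1) d b
          - (if c = d then 1 else 0)) := by
  obtain ⟨n, rfl⟩ : ∃ n, k = n + 1 := ⟨k - 1, by omega⟩
  rw [Nat.add_sub_cancel]
  exact le_antisymm (le_iInf₂ fun c d => chainRuns_succ_le n a b c d)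
    (iInf_le_chainRuns_succ (by omega) (hSstr (n - 1) (by omega)) a b)

/-- The dynamic-programming recurrence for the minimal number of runs: for
`2 ≤ k ≤ h`, `M[k,a,b] = min_{c,d ∈ Σ} ( M[k−1,a,c] + ρ_k(d,b) − δ_{cd} )`
(sets are indexed `0, …, h−1`, so `ρ_k` is `rhoRuns S (k−1)`; subtraction is
truncated subtraction in `ℕ∞`). -/
theorem chainRuns_recurrence {α : Type*} [Fintype α] [Nonempty α] [DecidableEq α]
    (h : ℕ) (hh : 2 ≤ h) (S : ℕ → Finset (List α))
    (hSne : ∀ j < h, (S j).Nonempty)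
    (hSstr : ∀ j < h, ∀ z ∈ S j, z ≠ [])
    (k : ℕ) (hk2 : 2 ≤ k) (hkh : k ≤ h) (a b : α) :
    chainRuns S k a b =
      ⨅ (c : α), ⨅ (d : α),
        (chainRuns S (k - 1) a c + rhoRuns S (k - 1) d b
          - (if c = d then 1 else 0)) :=
  chainRuns_recurrence_general h S hSstr k hk2 hkh a b
end
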